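/- arXiv:1603.04434 — 4 statements merged into one kernel-verified Lean document; each statement's English description precedes it below -/
import Mathlib

section
/- Let g(n) denote the parity of the number of 1's in the negabinary representation of n. For every odd k ≥ 1 and every m with 0 ≤ m < 2^k − (2/3)(2^(k−1) − 1), we have g(2^k + m) = g(m); and for every odd k ≥ 3 and every m with 2^k − (2/3)(2^(k−1) − 1) ≤ m < 2^k, we have g(2^k + m) = 1 − g(m). -/
/-- Digits of the negabinary (base -2) representation, least significant first. -/
def negaDigits (n : ℤ) : List ℕ :=
  if n = 0 then [] else (n % 2).toNat :: negaDigits ((n % 2 - n) / 2)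
termination_by 2 * n.natAbs + (if n < 0 then 1 else 0)
decreasing_by split_ifs <;> omega

/-- Parity of the number of 1's in the negabinary representation of n. -/
def g (n : ℕ) : ℕ := (negaDigits n).sum % 2

/-- The digit at position i in the negabinary representation. -/
def negaDigit (n : ℤ) (i : ℕ) : ℕ := (negaDigits n).getD i 0

/-- Number of runs (maximal blocks) of 1's in the binary representation of n. -/
def runsOfOnes (n : ℕ) : ℕ :=
  ((Finset.range (n + 1)).filter (fun i => n.testBit i ∧ ¬ n.testBit (i + 1))).card

/-- Parity of the number of runs of 1's in the binary representation of n. -/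
def r (n : ℕ) : ℕ := runsOfOnes n % 2


lemma negaDigits_zero : negaDigits 0 = [] := by rw [negaDigits]; simp

lemma negaDigits_sum_cons (m d : ℤ) (hd : d = 0 ∨ d = 1) :
    (negaDigits (-2 * m + d)).sum = d.toNat + (negaDigits m).sum := by
  by_cases h : -2 * m + d = 0
  · have hd0 : d = 0 := by omega
    have hm0 : m = 0 := by omega
    subst hd0; subst hm0
    norm_num [negaDigits_zero]
  · rw [negaDigits, if_neg h]
    have h1 : (-2 * m + d) % 2 = d := by omega
    rw [h1]
    have h2 : (d - (-2 * m + d)) / 2 = m := by omega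
    rw [h2, List.sum_cons]

def pl : ℕ → ℤ × ℤ
  | 0 => (0, 0)
  | j + 1 => (2 * (pl j).2 + 1, 2 * (pl j).1)

lemma pl_nonneg (j : ℕ) : 0 ≤ (pl j).1 ∧ 0 ≤ (pl j).2 := by
  induction j with
  | zero => simp [pl]
  | succ j ih => simp only [pl]; constructor <;> [linarith [ih.2]; linarith [ih.1]]

lemma sum_split : ∀ j : ℕ, ∀ a b : ℤ, -(pl j).2 ≤ b → b ≤ (pl j).1 →
    (negaDigits ((-2) ^ j * a + b)).sum = (negaDigits a).sum + (negaDigits b).sum := by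
  intro j
  induction j with
  | zero =>
    intro a b h1 h2
    have hb : b = 0 := by simp [pl] at h1 h2; omega
    subst hb; norm_num [negaDigits_zero]
  | succ j ih =>
    intro a b h1 h2
    have hple := pl_nonneg j
    have hpl1 : (pl (j + 1)).1 = 2 * (pl j).2 + 1 := by simp [pl]
    have hpl2 : (pl (j + 1)).2 = 2 * (pl j).1 := by simp [pl]
    set d := b % 2 with hd
    have hd01 : d = 0 ∨ d = 1 := by omega
    set b' := (d - b) / 2 with hb'
    have hbeq : b = -2 * b' + d := by omega
    have hb1 : -(pl j).2 ≤ b' := by omega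
    have hb2 : b' ≤ (pl j).1 := by omega
    have key : (-2) ^ (j + 1) * a + b = -2 * ((-2) ^ j * a + b') + d := by
      rw [hbeq]; ring
    rw [key, negaDigits_sum_cons _ _ hd01, ih a b' hb1 hb2, hbeq,
        negaDigits_sum_cons _ _ hd01]
    omega

lemma pl_spec : ∀ j : ℕ,
    (j % 2 = 1 → 3 * (pl j).1 = 2 ^ (j + 1) - 1 ∧ 3 * (pl j).2 = 2 ^ j - 2) ∧
    (j % 2 = 0 → 3 * (pl j).1 = 2 ^ j - 1 ∧ 3 * (pl j).2 = 2 ^ (j + 1) - 2) := by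
  intro j
  induction j with
  | zero => simp [pl]
  | succ j ih =>
    have hpl1 : (pl (j + 1)).1 = 2 * (pl j).2 + 1 := by simp [pl]
    have hpl2 : (pl (j + 1)).2 = 2 * (pl j).1 := by simp [pl]
    have e1 : (2 : ℤ) ^ (j + 1) = 2 * 2 ^ j := by ring
    have e2 : (2 : ℤ) ^ (j + 2) = 4 * 2 ^ j := by ring
    constructor
    · intro h
      obtain ⟨a1, a2⟩ := ih.2 (by omega)
      constructor <;> omega
    · intro h
      obtain ⟨a1, a2⟩ := ih.1 (by omega)
      constructor <;> omega

lemma sum_one : (negaDigits 1).sum = 1 := by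
  have := negaDigits_sum_cons 0 1 (Or.inr rfl)
  norm_num [negaDigits_zero] at this
  convert this using 2

lemma sum_neg_one : (negaDigits (-1)).sum = 2 := by
  have := negaDigits_sum_cons 1 1 (Or.inr rfl)
  norm_num [sum_one] at this
  convert this using 2


theorem stmt9 (k : ℕ) (hko : Odd k) :
    (1 ≤ k → ∀ m : ℕ, m < 2 ^ k - 2 * (2 ^ (k - 1) - 1) / 3 → g (2 ^ k + m) = g m) ∧
    (3 ≤ k → ∀ m : ℕ, 2 ^ k - 2 * (2 ^ (k - 1) - 1) / 3 ≤ m → m < 2 ^ k →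
      g (2 ^ k + m) = 1 - g m) := by
  have hk2 : k % 2 = 1 := Nat.odd_iff.mp hko
  have hk1 : 1 ≤ k := by omega
  -- divisibility: 3 ∣ 2 * (2^(k-1) - 1)
  obtain ⟨t, ht⟩ : ∃ t, k - 1 = 2 * t := ⟨(k - 1) / 2, by omega⟩
  have h4 : (2 : ℕ) ^ (k - 1) = 4 ^ t := by rw [ht, pow_mul]; norm_num
  have hmod : (4 : ℕ) ^ t % 3 = 1 := by rw [Nat.pow_mod]; norm_num
  have hpow1 : (1 : ℕ) ≤ 2 ^ (k - 1) := Nat.one_le_two_pow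
  have hkk : k - 1 + 1 = k := by omega
  have hpowk : 2 ^ (k - 1) * 2 = 2 ^ k := by rw [← pow_succ, hkk]
  have hN : 3 * (2 * (2 ^ (k - 1) - 1) / 3) + 2 = 2 ^ k := by
    have hdvd : (3 : ℕ) ∣ 2 * (2 ^ (k - 1) - 1) := by omega
    have := Nat.mul_div_cancel' hdvd
    omega
  set N := 2 * (2 ^ (k - 1) - 1) / 3 with hNdef
  -- pl facts
  obtain ⟨hP, hQ⟩ := (pl_spec k).1 hk2
  have hplpos := pl_nonneg k
  have hplpos' := pl_nonneg (k + 1)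
  have hpl1 : (pl (k + 1)).1 = 2 * (pl k).2 + 1 := by simp [pl]
  have hpl2 : (pl (k + 1)).2 = 2 * (pl k).1 := by simp [pl]
  have hNZ : 3 * (N : ℤ) + 2 = 2 ^ k := by exact_mod_cast hN
  have hek : (2 : ℤ) ^ (k + 1) = 2 * 2 ^ k := by ring
  have hnegpow : (-2 : ℤ) ^ k = -(2 ^ k) := Odd.neg_pow hko 2
  have hnegpow' : (-2 : ℤ) ^ (k + 1) = 2 ^ (k + 1) := Even.neg_pow (Nat.even_add_one.mpr (by simp [Nat.not_even_iff, hk2]; exact hko)) 2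
  constructor
  · intro _ m hm
    have hmN : (m : ℤ) + N < 2 ^ k := by
      have : m + N < 2 ^ k := by omega
      exact_mod_cast this
    have hb2 : (m : ℤ) ≤ (pl k).1 := by omega
    have hb1 : -(pl k).2 ≤ (m : ℤ) := by have : (0:ℤ) ≤ m := Int.natCast_nonneg m; omega
    have hrep : ((2 ^ k + m : ℕ) : ℤ) = (-2) ^ k * (-1) + (m : ℤ) := by
      push_cast [hnegpow]; ring
    show (negaDigits ((2 ^ k + m : ℕ) : ℤ)).sum % 2 = (negaDigits (m : ℤ)).sum % 2
    rw [hrep, sum_split k (-1) m hb1 hb2, sum_neg_one]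
    omega
  · intro _ m hm1 hm2
    have hge : (2 : ℤ) ^ k ≤ (m : ℤ) + N := by
      have : 2 ^ k ≤ m + N := by omega
      exact_mod_cast this
    have hlt : (m : ℤ) < 2 ^ k := by exact_mod_cast hm2
    set b : ℤ := (m : ℤ) - 2 ^ k with hbdef
    have hb1 : -(pl k).2 ≤ b := by omega
    have hb2 : b ≤ (pl k).1 := by omega
    have hc1 : -(pl (k + 1)).2 ≤ b := by omega
    have hc2 : b ≤ (pl (k + 1)).1 := by omega
    have e1 : (m : ℤ) = (-2) ^ k * (-1) + b := by rw [hnegpow]; ring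
    have e2 : ((2 ^ k + m : ℕ) : ℤ) = (-2) ^ (k + 1) * 1 + b := by
      push_cast [hnegpow']; ring
    show (negaDigits ((2 ^ k + m : ℕ) : ℤ)).sum % 2 = 1 - (negaDigits (m : ℤ)).sum % 2
    rw [e2, sum_split (k + 1) 1 b hc1 hc2, sum_one, e1, sum_split k (-1) b hb1 hb2,
      sum_neg_one]
    omega
end

section
/- Let r(n) denote the parity of the number of runs of 1's in the binary representation of n. The sequence (r(n))_{n≥0} is quint-free: there do not exist integers i ≥ 0 and s ≥ 1 such that r(i + ks + j) takes the same value for k = 0, 1, 2, 3, 4 for every 0 ≤ j < s (i.e., no factor of the form XXXXX with X nonempty occurs). -/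
/-!
Since `r (2n) = r n` while `r (2n+1) = r (2n)` exactly when `n` is odd, a factor `XXXXX` with
`|X| = s` even halves to a fifth power with period `s / 2`. For odd `s`, an even position `2m`
near the start of the factor gives `r (2m) = r (2(m+s))` and `r (2m+1) = r (2(m+s)+1)`,
forcing `m` and `m + s` to have the same parity, which is absurd.
-/

lemma runsOfOnes_eq_sum {n N : ℕ} (h : n < N) :
    runsOfOnes n = ∑ i ∈ Finset.range N, if n.testBit i ∧ ¬ n.testBit (i + 1) then 1 else 0 := by
  rw [runsOfOnes, Finset.card_filter]
  refine Finset.sum_subset (Finset.range_subset_range.2 h) fun i _ hi => ?_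
  have hin : n < 2 ^ i :=
    (Nat.lt_two_pow_self).trans_le (Nat.pow_le_pow_right two_pos (by simp at hi; omega))
  simp [Nat.testBit_lt_two_pow hin]

lemma runsOfOnes_two_mul (n : ℕ) : runsOfOnes (2 * n) = runsOfOnes n := by
  rw [runsOfOnes_eq_sum (show 2 * n < 2 * n + 2 by omega),
    runsOfOnes_eq_sum (show n < 2 * n + 1 by omega), Finset.sum_range_succ']
  simp only [Nat.testBit_succ, show 2 * n / 2 = n by omega]
  simp [Nat.testBit_zero]

lemma runsOfOnes_two_mul_add_one (n : ℕ) :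
    runsOfOnes (2 * n + 1) = runsOfOnes n + if n % 2 = 0 then 1 else 0 := by
  rw [runsOfOnes_eq_sum (show 2 * n + 1 < 2 * n + 2 by omega),
    runsOfOnes_eq_sum (show n < 2 * n + 1 by omega), Finset.sum_range_succ']
  simp only [Nat.testBit_succ, show (2 * n + 1) / 2 = n by omega]
  by_cases hn : n % 2 = 0 <;> simp [Nat.testBit_zero, hn]

lemma r_two_mul (n : ℕ) : r (2 * n) = r n := by
  rw [r, r, runsOfOnes_two_mul]

lemma r_two_mul_add_one_eq_iff (n : ℕ) : r (2 * n + 1) = r (2 * n) ↔ Odd n := by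
  rw [r, r, runsOfOnes_two_mul_add_one, runsOfOnes_two_mul, Nat.odd_iff]
  split_ifs <;> omega

section TwoMul

variable {α : Type*} {f : ℕ → α}

lemma odd_iff_odd_of_two_mul_of_two_mul_add_one
    (hodd : ∀ n, f (2 * n + 1) = f (2 * n) ↔ Odd n) {a b : ℕ}
    (h₀ : f (2 * a) = f (2 * b)) (h₁ : f (2 * a + 1) = f (2 * b + 1)) : Odd a ↔ Odd b := by
  rw [← hodd, ← hodd, h₀, h₁]

lemma forall_add_eq_of_forall_add_mul_add_eq {i s : ℕ} (hs : 0 < s)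
    (H : ∀ j < s, ∀ k ≤ 4, f (i + k * s + j) = f (i + j)) :
    ∀ n, i ≤ n → n < i + 4 * s → f (n + s) = f n := by
  intro n hn₁ hn₂
  obtain ⟨d, rfl⟩ := Nat.exists_eq_add_of_le hn₁
  have hk : d / s < 4 := (Nat.div_lt_iff_lt_mul hs).2 (by omega)
  have hd := Nat.div_add_mod' d s
  have h₁ := H (d % s) (Nat.mod_lt d hs) (d / s) hk.le
  have h₂ := H (d % s) (Nat.mod_lt d hs) (d / s + 1) hk
  rw [add_mul, one_mul] at h₂
  rw [show i + d + s = i + (d / s * s + s) + d % s by omega,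
    show i + d = i + d / s * s + d % s by omega, h₂, h₁]

/-- `s`-periodicity on `[i, i + 4s)` says that positions `i, …, i + 5s - 1` form a factor `XXXXX`. -/
theorem not_forall_add_period_eq (heven : ∀ n, f (2 * n) = f n)
    (hodd : ∀ n, f (2 * n + 1) = f (2 * n) ↔ Odd n) {s : ℕ} (hs : 0 < s) (i : ℕ) :
    ¬ ∀ n, i ≤ n → n < i + 4 * s → f (n + s) = f n := by
  induction s using Nat.strong_induction_on generalizing i with
  | _ s ih =>
    intro hper
    rcases Nat.even_or_odd' s with ⟨t, rfl | rfl⟩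
    · refine ih t (by omega) (by omega) ((i + 1) / 2) fun m hm₁ hm₂ => ?_
      have h := hper (2 * m) (by omega) (by omega)
      rwa [show 2 * m + 2 * t = 2 * (m + t) by ring, heven, heven] at h
    · set m := (i + 1) / 2
      have h₀ : f (2 * (m + (2 * t + 1))) = f (2 * m) := by
        rw [show 2 * (m + (2 * t + 1)) = 2 * m + (2 * t + 1) + (2 * t + 1) by ring,
          hper _ (by omega) (by omega), hper _ (by omega) (by omega)]
      have h₁ : f (2 * (m + (2 * t + 1)) + 1) = f (2 * m + 1) := by
        rw [show 2 * (m + (2 * t + 1)) + 1 = 2 * m + 1 + (2 * t + 1) + (2 * t + 1) by ring,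
          hper _ (by omega) (by omega), hper _ (by omega) (by omega)]
      have hparity := odd_iff_odd_of_two_mul_of_two_mul_add_one hodd h₀ h₁
      simp only [Nat.odd_iff] at hparity
      omega

end TwoMul

theorem stmt12 :
    ¬ ∃ (i s : ℕ), 1 ≤ s ∧ ∀ j < s, ∀ k ≤ 4, r (i + k * s + j) = r (i + j) := by
  rintro ⟨i, s, hs, H⟩
  exact not_forall_add_period_eq r_two_mul r_two_mul_add_one_eq_iff hs i
    (forall_add_eq_of_forall_add_mul_add_eq hs H)
end

section
/- Let r(n) denote the parity of the number of runs of 1's in the binary representation of n. Then there is no n with r(n) = r(n+1) = r(n+2) = r(n+3) = r(n+4), i.e., the sequence R contains no five consecutive equal terms. -/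
/-! The binary digits of `4k + 1` are those of `4k` except the last one, which is an isolated `1`,
so `4k + 1` has exactly one more run of ones than `4k` and `r (4k + 1) ≠ r (4k)`. Among any five
consecutive integers there is such a pair `4k, 4k + 1`. -/

open Finset

lemma runsOfOnes_eq_card_range {n N : ℕ} (h : n < 2 ^ N) :
    runsOfOnes n = #{i ∈ range N | n.testBit i ∧ ¬ n.testBit (i + 1)} := by
  unfold runsOfOnes
  congr 1
  ext i
  simp only [mem_filter, mem_range, and_congr_left_iff]
  intro ⟨hi, _⟩
  have hle : 2 ^ i ≤ n := Nat.ge_two_pow_of_testBit hi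
  have : i < 2 ^ i := Nat.lt_two_pow_self
  have : i < N := (Nat.pow_lt_pow_iff_right (by norm_num)).1 (hle.trans_lt h)
  omega

lemma testBit_four_mul_add_one_succ (k i : ℕ) :
    (4 * k + 1).testBit (i + 1) = (4 * k).testBit (i + 1) := by
  simp only [Nat.testBit_succ, show (4 * k + 1) / 2 = 4 * k / 2 by omega]

lemma runsOfOnes_four_mul_add_one (k : ℕ) :
    runsOfOnes (4 * k + 1) = runsOfOnes (4 * k) + 1 := by
  have hN : 4 * k < 2 ^ (4 * k + 1 + 1) :=
    Nat.lt_two_pow_self.trans (Nat.pow_lt_pow_right (by norm_num) (by omega))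
  have h0 : (4 * k).testBit 0 = false := by
    simp only [Nat.testBit_zero, decide_eq_false_iff_not]; omega
  have h1 : (4 * k).testBit 1 = false := by
    simp only [Nat.testBit_succ, Nat.testBit_zero, decide_eq_false_iff_not]; omega
  have h0' : (4 * k + 1).testBit 0 = true := by
    simp only [Nat.testBit_zero, decide_eq_true_iff]; omega
  rw [runsOfOnes_eq_card_range hN, runsOfOnes, card_filter, card_filter,
    sum_range_succ' _ (4 * k + 1), sum_range_succ' _ (4 * k + 1)]
  simp [testBit_four_mul_add_one_succ, h0, h1, h0']

lemma r_four_mul_add_one_ne (k : ℕ) : r (4 * k + 1) ≠ r (4 * k) := by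
  unfold r
  have := runsOfOnes_four_mul_add_one k
  omega

theorem stmt13 :
    ¬ ∃ n : ℕ, r n = r (n + 1) ∧ r (n + 1) = r (n + 2) ∧
      r (n + 2) = r (n + 3) ∧ r (n + 3) = r (n + 4) := by
  rintro ⟨n, h0, h1, h2, h3⟩
  have hconst : ∀ i ≤ 4, r (n + i) = r n := by
    intro i hi
    interval_cases i <;> simp_all
  obtain ⟨j, hj, hk⟩ : ∃ j ≤ 3, 4 * ((n + 3) / 4) = n + j :=
    ⟨4 * ((n + 3) / 4) - n, by omega, by omega⟩
  apply r_four_mul_add_one_ne ((n + 3) / 4)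
  rw [hk, hconst j (by omega), add_assoc, hconst (j + 1) (by omega)]
end

section
/- For k ≥ 0, the negabinary representation of 2(2^(k+1) − 1) = 2^(k+2) − 2 has digit 1 exactly at positions {1, k+2} when k is even, and exactly at positions {1, k+2, k+3} when k is odd. -/
lemma negaDigits_one : negaDigits 1 = [1] := by
  rw [negaDigits]; norm_num; rw [negaDigits]; simp

lemma negaDigits_neg_one : negaDigits (-1) = [1, 1] := by
  rw [negaDigits]; norm_num [negaDigits_one]

lemma negaDigits_pow (k : ℕ) :
    negaDigits ((2:ℤ)^k) = List.replicate k 0 ++ (if Even k then [1] else [1,1]) ∧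
    negaDigits (-(2:ℤ)^k) = List.replicate k 0 ++ (if Even k then [1,1] else [1]) := by
  induction k with
  | zero => simp [negaDigits_one, negaDigits_neg_one]
  | succ k ih =>
    have h2 : ((2:ℤ)^(k+1)) % 2 = 0 := by simp [pow_succ, Int.mul_emod]
    have h2' : (-(2:ℤ)^(k+1)) % 2 = 0 := by omega
    have e1 : ((0:ℤ) - 2^(k+1)) / 2 = -(2:ℤ)^k := by
      rw [pow_succ]; generalize (2:ℤ)^k = x; omega
    have e2 : ((0:ℤ) - -2^(k+1)) / 2 = (2:ℤ)^k := by
      rw [pow_succ]; generalize (2:ℤ)^k = x; omega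
    constructor
    · rw [negaDigits, if_neg (by positivity), h2, e1]
      simp only [Int.toNat_zero, ih.2, Nat.even_add_one]
      by_cases h : Even k <;> simp [h, List.replicate_succ]
    · rw [negaDigits, if_neg (by simp), h2', e2]
      simp only [Int.toNat_zero, ih.1, Nat.even_add_one]
      by_cases h : Even k <;> simp [h, List.replicate_succ]

lemma getD_rep (k : ℕ) (L : List ℕ) (j : ℕ) :
    (List.replicate k (0:ℕ) ++ L).getD j 0 = if j < k then 0 else L.getD (j - k) 0 := by
  rcases lt_or_ge j k with h | h
  · rw [if_pos h, List.getD_append _ _ _ _ (by simpa using h)]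
    simpa using List.getD_replicate_default_eq k j (d := (0:ℕ))
  · rw [if_neg (by omega), List.getD_append_right _ _ _ _ (by simpa using h)]
    simp

lemma key (k : ℕ) : negaDigits ((2:ℤ)^(k+2) - 2) = 0 :: 1 :: negaDigits ((2:ℤ)^k) := by
  have hx : (2:ℤ)^(k+2) = 4 * 2^k := by ring
  have hp : (0:ℤ) < 2^k := by positivity
  have hne : ((2:ℤ)^(k+2) - 2) ≠ 0 := by rw [hx]; omega
  have hm : ((2:ℤ)^(k+2) - 2) % 2 = 0 := by rw [hx]; omega
  have e1 : ((0:ℤ) - (2^(k+2) - 2)) / 2 = 1 - 2 * 2^k := by rw [hx]; omega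
  have hne2 : (1:ℤ) - 2 * 2^k ≠ 0 := by omega
  have hm2 : ((1:ℤ) - 2 * 2^k) % 2 = 1 := by omega
  have e2 : ((1:ℤ) - (1 - 2 * 2^k)) / 2 = 2^k := by omega
  rw [negaDigits, if_neg hne, hm, e1, negaDigits, if_neg hne2, hm2, e2]
  simp

theorem stmt17 (k : ℕ) (i : ℕ) :
    negaDigit ((2 : ℤ) ^ (k + 2) - 2) i =
      if Even k then (if i = 1 ∨ i = k + 2 then 1 else 0)
      else (if i = 1 ∨ i = k + 2 ∨ i = k + 3 then 1 else 0) := by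
  rw [negaDigit, key, (negaDigits_pow k).1]
  match i with
  | 0 => simp
  | 1 => simp
  | (j+2) =>
    simp only [List.getD_cons_succ, getD_rep]
    by_cases h : Even k <;> simp only [h, if_true, if_false]
    · rcases lt_trichotomy j k with hj | hj | hj
      · rw [if_pos hj, if_neg (by omega)]
      · subst hj; rw [if_neg (by omega), if_pos (by omega)]; simp
      · rw [if_neg (by omega), if_neg (by omega)]
        rcases Nat.exists_eq_add_of_lt hj with ⟨m, rfl⟩
        rw [show k + m + 1 - k = m + 1 by omega]
        simp [List.getD]
    · rcases lt_trichotomy j k with hj | hj | hj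
      · rw [if_pos hj, if_neg (by omega)]
      · subst hj; rw [if_neg (by omega), if_pos (by omega)]; simp
      · rw [if_neg (by omega)]
        rcases Nat.exists_eq_add_of_lt hj with ⟨m, rfl⟩
        rw [show k + m + 1 - k = m + 1 by omega]
        rcases m with _ | m
        · rw [if_pos (by omega)]; simp [List.getD]
        · rw [if_neg (by omega)]; simp [List.getD]
end
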